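/- The number of (isomorphism classes of) trees with r ≥ 3 labeled leaves in which every internal vertex has degree exactly 3 is the double factorial (2r − 5)!! = 1·3·5·…·(2r−5). -/

import Mathlib

/-!
Write `r = n + 2`; a tree lives on `Fin (n + 2) ⊕ Fin n`, so its `n` internal vertices are
labelled as well. Removing the last leaf together with its neighbour, and joining the two other
neighbours of that vertex by an edge, inverts the operation that subdivides one of the `2n + 1`
edges of a tree with `n + 2` leaves by a new internal vertex (inserted at one of `n + 1` positions
among the internal labels) and hangs the new leaf on it. Hence there are `(2n - 1)‼ * n!` such
trees. By the same decomposition a leaf-fixing automorphism is the identity, so the `n!`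
relabellings of the internal vertices of a tree are pairwise distinct; as they make up its
isomorphism class, there are `(2n - 1)‼ = (2r - 5)‼` classes.
-/

/-- A tree with `r` labeled leaves, all of whose internal vertices have degree exactly 3,
has exactly `r − 2` internal vertices; so every isomorphism class is represented by a
tree structure on the vertex set `Fin r ⊕ Fin (r − 2)`, with the leaves labeled by
`Fin r`.  A labeled isomorphism between two such trees is a graph isomorphism fixing
each leaf label. -/
def LeafLabeledTrivalentTree (r : ℕ) : Type :=
  {G : SimpleGraph (Fin r ⊕ Fin (r - 2)) // G.IsTree ∧
    (∀ i : Fin r, (G.neighborSet (Sum.inl i)).ncard = 1) ∧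
    (∀ j : Fin (r - 2), (G.neighborSet (Sum.inr j)).ncard = 3)}

/-- Labeled isomorphism of leaf-labeled trees. -/
def labIso {r : ℕ} (G G' : LeafLabeledTrivalentTree r) : Prop :=
  ∃ φ : G.1 ≃g G'.1, ∀ i : Fin r, φ (Sum.inl i) = Sum.inl i

open Function

theorem Nat.card_quot_mul_eq_of_card_class {X : Type*} [Finite X] {r : X → X → Prop}
    (hr : Equivalence r) {c : ℕ} (hc : ∀ x, Nat.card {y // r x y} = c) :
    Nat.card (Quot r) * c = Nat.card X := by
  have := Fintype.ofFinite (Quot r)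
  have hfiber (q : Quot r) : Nat.card {x // Quot.mk r x = q} = c := by
    rw [← hc q.out]
    refine Nat.card_congr (Equiv.subtypeEquivRight fun x ↦ ?_)
    rw [← q.out_eq, Quot.eq, hr.eqvGen_iff, q.out_eq]
    exact ⟨hr.symm, hr.symm⟩
  rw [← Nat.card_congr (Equiv.sigmaFiberEquiv (Quot.mk r)), Nat.card_sigma]
  simp [hfiber, Nat.card_eq_fintype_card, mul_comm]

theorem Equiv.Perm.exists_sumCongr_one_eq {α β : Type*} [Finite α] [Finite β]
    (φ : Perm (α ⊕ β)) (h : ∀ a, φ (Sum.inl a) = Sum.inl a) : ∃ σ : Perm β, sumCongr 1 σ = φ := by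
  obtain ⟨⟨σ₁, σ₂⟩, hσ⟩ := mem_sumCongrHom_range_of_perm_mapsTo_inl (σ := φ)
    (by rintro _ ⟨a, rfl⟩; exact ⟨a, (h a).symm⟩)
  refine ⟨σ₂, ?_⟩
  rw [← hσ, sumCongrHom_apply]
  congr
  ext a
  simpa using ((DFunLike.congr_fun hσ (Sum.inl a)).trans (h a)).symm

namespace SimpleGraph

variable {V W : Type*} {G : SimpleGraph V}

theorem Reachable.mem_of_adj_closed {S : Set V} (hS : ∀ a ∈ S, ∀ b, G.Adj a b → b ∈ S)
    {u v : V} (huv : G.Reachable u v) (hu : u ∈ S) : v ∈ S := by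
  obtain ⟨p⟩ := huv
  induction p with
  | nil => exact hu
  | cons h _ ih => exact ih (hS _ hu _ h)

theorem Connected.eq_or_eq_of_neighborSet_eq (hG : G.Connected) {u v : V}
    (hu : G.neighborSet u = {v}) (hv : G.neighborSet v = {u}) (w : V) : w = u ∨ w = v := by
  refine (hG u w).mem_of_adj_closed (S := {u, v}) ?_ (.inl rfl)
  rintro a (rfl | rfl) b hab
  · exact .inr (by rwa [← mem_neighborSet, hu] at hab)
  · exact .inl (by rwa [← mem_neighborSet, hv] at hab)

theorem Iso.ncard_neighborSet {G' : SimpleGraph W} (φ : G ≃g G') (v : V) :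
    (G'.neighborSet (φ v)).ncard = (G.neighborSet v).ncard := by
  rw [← Nat.card_coe_set_eq, ← Nat.card_coe_set_eq]
  exact Nat.card_congr (φ.mapNeighborSet v).symm

theorem sum_ncard_neighborSet [Fintype V] :
    ∑ v, (G.neighborSet v).ncard = 2 * Nat.card G.edgeSet := by
  classical
  have h (v : V) : (G.neighborSet v).ncard = G.degree v := by
    rw [← card_neighborSet_eq_degree, Set.ncard_eq_toFinset_card', Set.toFinset_card]
  simp only [h, sum_degrees_eq_twice_card_edges, ← edgeFinset_card, Nat.card_eq_fintype_card]

end SimpleGraph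

namespace LeafLabeledTrivalentTree

open SimpleGraph

abbrev Vert (n : ℕ) : Type := Fin (n + 2) ⊕ Fin n

variable {n : ℕ}

def IsTrivalent (G : SimpleGraph (Vert n)) : Prop :=
  (∀ i, (G.neighborSet (Sum.inl i)).ncard = 1) ∧ ∀ k, (G.neighborSet (Sum.inr k)).ncard = 3

-- `LeafLabeledTrivalentTree (n + 2)` is by definition `{G // IsTrivalentTree G}`.
def IsTrivalentTree (G : SimpleGraph (Vert n)) : Prop :=
  G.IsTree ∧ IsTrivalent G

theorem IsTrivalent.card_edgeSet {G : SimpleGraph (Vert n)} (hG : IsTrivalent G) :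
    Nat.card G.edgeSet = 2 * n + 1 := by
  have := G.sum_ncard_neighborSet
  simp only [Fintype.sum_sum_type, hG.1, hG.2, Finset.sum_const, Finset.card_univ,
    Fintype.card_fin, smul_eq_mul] at this
  omega

theorem isTrivalentTree_iff_connected {G : SimpleGraph (Vert n)} :
    IsTrivalentTree G ↔ G.Connected ∧ IsTrivalent G := by
  refine ⟨fun h ↦ ⟨h.1.connected, h.2⟩, fun ⟨hc, hG⟩ ↦ ⟨?_, hG⟩⟩
  rw [isTree_iff_connected_and_card, hG.card_edgeSet, Nat.card_eq_fintype_card]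
  simp only [Fintype.card_sum, Fintype.card_fin]
  exact ⟨hc, by omega⟩

def lift (j : Fin (n + 1)) : Vert n → Vert (n + 1) := Sum.map Fin.castSucc j.succAbove

abbrev newLeaf (n : ℕ) : Vert (n + 1) := Sum.inl (Fin.last (n + 2))

variable {j : Fin (n + 1)}

theorem lift_injective (j : Fin (n + 1)) : Injective (lift j) :=
  Sum.map_injective.mpr ⟨Fin.castSucc_injective _, Fin.succAbove_right_injective⟩

@[simp]
theorem lift_inj {u v : Vert n} : lift j u = lift j v ↔ u = v :=
  (lift_injective j).eq_iff

@[simp]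
theorem lift_ne_node (u : Vert n) : lift j u ≠ Sum.inr j := by
  cases u <;> simp [lift, Fin.succAbove_ne]

@[simp]
theorem lift_ne_newLeaf (u : Vert n) : lift j u ≠ newLeaf n := by
  cases u <;> simp [lift, Fin.castSucc_ne_last]

theorem eq_node_or_eq_newLeaf_or_exists_lift (j : Fin (n + 1)) (a : Vert (n + 1)) :
    a = Sum.inr j ∨ a = newLeaf n ∨ ∃ u, lift j u = a := by
  rcases a with i | k
  · induction i using Fin.lastCases with
    | last => exact .inr (.inl rfl)
    | cast i => exact .inr (.inr ⟨.inl i, rfl⟩)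
  · rcases eq_or_ne k j with rfl | hk
    · exact .inl rfl
    · obtain ⟨k, rfl⟩ := Fin.exists_succAbove_eq hk
      exact .inr (.inr ⟨.inr k, rfl⟩)

-- Subdivide `e` by the new internal vertex `j` and hang the new leaf on it.
def graft (G : SimpleGraph (Vert n)) (e : Sym2 (Vert n)) (j : Fin (n + 1)) :
    SimpleGraph (Vert (n + 1)) :=
  fromRel fun a b ↦ (∃ u v, G.Adj u v ∧ s(u, v) ≠ e ∧ a = lift j u ∧ b = lift j v) ∨
    a = Sum.inr j ∧ (b = newLeaf n ∨ ∃ u ∈ e, b = lift j u)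

variable {G : SimpleGraph (Vert n)} {e : Sym2 (Vert n)}

theorem graft_adj_lift {u v : Vert n} :
    (graft G e j).Adj (lift j u) (lift j v) ↔ G.Adj u v ∧ s(u, v) ≠ e := by
  refine ⟨?_, fun ⟨h, he⟩ ↦ ⟨by simpa using h.ne, .inl (.inl ⟨u, v, h, he, rfl, rfl⟩)⟩⟩
  rintro ⟨-, (⟨u', v', h, he, hu, hv⟩ | ⟨hu, -⟩) | (⟨v', u', h, he, hv, hu⟩ | ⟨hv, -⟩)⟩
  · rw [lift_inj] at hu hv
    exact hu ▸ hv ▸ ⟨h, he⟩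
  · exact absurd hu (lift_ne_node u)
  · rw [lift_inj] at hu hv
    exact hu ▸ hv ▸ ⟨h.symm, Sym2.eq_swap ▸ he⟩
  · exact absurd hv (lift_ne_node v)

theorem graft_adj_node_lift {u : Vert n} :
    (graft G e j).Adj (Sum.inr j) (lift j u) ↔ u ∈ e := by
  refine ⟨?_, fun hu ↦ ⟨(lift_ne_node u).symm, .inl (.inr ⟨rfl, .inr ⟨u, hu, rfl⟩⟩)⟩⟩
  rintro ⟨-, (⟨u', v', -, -, hu, -⟩ | ⟨-, hu | ⟨u', hu', hu⟩⟩) | (⟨_, _, -, -, -, hu⟩ | ⟨hu, -⟩)⟩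
  · exact absurd hu.symm (lift_ne_node u')
  · exact absurd hu (lift_ne_newLeaf u)
  · rwa [lift_inj.mp hu]
  · exact absurd hu.symm (lift_ne_node _)
  · exact absurd hu (lift_ne_node u)

theorem graft_adj_node_newLeaf : (graft G e j).Adj (Sum.inr j) (newLeaf n) :=
  ⟨by simp, .inl (.inr ⟨rfl, .inl rfl⟩)⟩

theorem not_graft_adj_newLeaf_lift {u : Vert n} : ¬ (graft G e j).Adj (newLeaf n) (lift j u) := by
  rintro ⟨-, (⟨u', -, -, -, hu, -⟩ | ⟨hu, -⟩) | (⟨_, _, -, -, -, hu⟩ | ⟨hu, -⟩)⟩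
  · exact lift_ne_newLeaf u' hu.symm
  · simp at hu
  · exact lift_ne_newLeaf _ hu.symm
  · exact lift_ne_node u hu

theorem neighborSet_graft_newLeaf : (graft G e j).neighborSet (newLeaf n) = {Sum.inr j} := by
  ext a
  rcases eq_node_or_eq_newLeaf_or_exists_lift j a with rfl | rfl | ⟨u, rfl⟩
  · simpa using graft_adj_node_newLeaf.symm
  · simp
  · simpa using not_graft_adj_newLeaf_lift

theorem neighborSet_graft_node (x y : Vert n) :
    (graft G s(x, y) j).neighborSet (Sum.inr j) = {newLeaf n, lift j x, lift j y} := by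
  ext a
  rcases eq_node_or_eq_newLeaf_or_exists_lift j a with rfl | rfl | ⟨u, rfl⟩
  · simp [eq_comm (a := Sum.inr j)]
  · simpa using graft_adj_node_newLeaf
  · simp [graft_adj_node_lift, eq_comm (a := u)]

theorem neighborSet_graft_lift_of_notMem {u : Vert n} (hu : u ∉ e) :
    (graft G e j).neighborSet (lift j u) = lift j '' G.neighborSet u := by
  ext a
  rcases eq_node_or_eq_newLeaf_or_exists_lift j a with rfl | rfl | ⟨v, rfl⟩
  · rw [mem_neighborSet, adj_comm, graft_adj_node_lift]
    simpa using hu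
  · rw [mem_neighborSet, adj_comm]
    simpa using not_graft_adj_newLeaf_lift
  · simp only [mem_neighborSet, graft_adj_lift, (lift_injective j).mem_set_image]
    exact ⟨And.left, fun h ↦ ⟨h, fun he ↦ hu (he ▸ Sym2.mem_mk_left u v)⟩⟩

theorem neighborSet_graft_lift_of_eq {u v : Vert n} :
    (graft G s(u, v) j).neighborSet (lift j u) =
      insert (Sum.inr j) (lift j '' (G.neighborSet u \ {v})) := by
  ext a
  rcases eq_node_or_eq_newLeaf_or_exists_lift j a with rfl | rfl | ⟨w, rfl⟩
  · rw [mem_neighborSet, adj_comm, graft_adj_node_lift]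
    simp
  · rw [mem_neighborSet, adj_comm]
    simpa using not_graft_adj_newLeaf_lift
  · simp only [mem_neighborSet, graft_adj_lift, ne_eq, Sym2.congr_right, Set.mem_insert_iff,
      (lift_injective j).mem_set_image, lift_ne_node, false_or, Set.mem_sdiff,
      Set.mem_singleton_iff]

theorem ncard_neighborSet_graft_lift (he : e ∈ G.edgeSet) (u : Vert n) :
    ((graft G e j).neighborSet (lift j u)).ncard = (G.neighborSet u).ncard := by
  by_cases hu : u ∈ e
  · obtain ⟨v, rfl⟩ := Sym2.mem_iff_exists.mp hu
    rw [neighborSet_graft_lift_of_eq,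
      Set.ncard_insert_of_notMem (fun ⟨w, _, hw⟩ ↦ lift_ne_node w hw : Sum.inr j ∉ lift j '' _),
      Set.ncard_image_of_injective _ (lift_injective j),
      Set.ncard_sdiff_singleton_add_one (show v ∈ G.neighborSet u from he)]
  · rw [neighborSet_graft_lift_of_notMem hu, Set.ncard_image_of_injective _ (lift_injective j)]

theorem connected_graft {x y : Vert n} (hG : G.Connected) :
    (graft G s(x, y) j).Connected := by
  have hlift (u : Vert n) : (graft G s(x, y) j).Reachable (Sum.inr j) (lift j u) := by
    refine (hG x u).mem_of_adj_closed (S := {u | (graft G s(x, y) j).Reachable _ (lift j u)})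
      (fun a ha b hab ↦ ?_) (graft_adj_node_lift.mpr (Sym2.mem_mk_left x y)).reachable
    by_cases hab' : s(a, b) = s(x, y)
    · exact (graft_adj_node_lift.mpr (hab' ▸ Sym2.mem_mk_right a b)).reachable
    · exact ha.trans (graft_adj_lift.mpr ⟨hab, hab'⟩).reachable
  refine (connected_iff_exists_forall_reachable _).mpr ⟨Sum.inr j, fun a ↦ ?_⟩
  rcases eq_node_or_eq_newLeaf_or_exists_lift j a with rfl | rfl | ⟨u, rfl⟩
  · rfl
  · exact graft_adj_node_newLeaf.reachable
  · exact hlift u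

theorem connected_of_connected_graft {x y : Vert n} (hxy : G.Adj x y)
    (hG : (graft G s(x, y) j).Connected) : G.Connected := by
  let S : Set (Vert (n + 1)) := {a | ∀ u, lift j u = a → G.Reachable x u}
  have hS (a : Vert (n + 1)) (ha : a ∈ S) (b) (hab : (graft G s(x, y) j).Adj a b) : b ∈ S := by
    rintro v rfl
    rcases eq_node_or_eq_newLeaf_or_exists_lift j a with rfl | rfl | ⟨u, rfl⟩
    · rcases Sym2.mem_iff.mp (graft_adj_node_lift.mp hab) with rfl | rfl
      exacts [.rfl, hxy.reachable]
    · exact absurd hab not_graft_adj_newLeaf_lift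
    · exact (ha u rfl).trans (graft_adj_lift.mp hab).1.reachable
  have hnode : Sum.inr j ∈ S := fun u hu ↦ absurd hu (lift_ne_node u)
  exact (connected_iff_exists_forall_reachable _).mpr
    ⟨x, fun u ↦ (hG _ _).mem_of_adj_closed hS hnode u rfl⟩

theorem isTrivalent_graft_iff {x y : Vert n} (hxy : G.Adj x y) :
    IsTrivalent (graft G s(x, y) j) ↔ IsTrivalent G := by
  have hdeg := ncard_neighborSet_graft_lift (j := j) (show s(x, y) ∈ G.edgeSet from hxy)
  constructor
  · rintro ⟨hleaf, hnode⟩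
    exact ⟨fun i ↦ hdeg (.inl i) ▸ hleaf i.castSucc, fun k ↦ hdeg (.inr k) ▸ hnode (j.succAbove k)⟩
  · rintro ⟨hleaf, hnode⟩
    refine ⟨fun i ↦ ?_, fun k ↦ ?_⟩
    · induction i using Fin.lastCases with
      | last => rw [neighborSet_graft_newLeaf, Set.ncard_singleton]
      | cast i => exact (hdeg (.inl i)).trans (hleaf i)
    · induction k using Fin.succAboveCases j with
      | x =>
        rw [neighborSet_graft_node, Set.ncard_insert_of_notMem
          fun h ↦ by rcases h with h | h <;> exact lift_ne_newLeaf _ h.symm,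
          Set.ncard_pair (by simpa using hxy.ne)]
      | p k => exact (hdeg (.inr k)).trans (hnode k)

theorem isTrivalentTree_graft_iff (he : e ∈ G.edgeSet) :
    IsTrivalentTree (graft G e j) ↔ IsTrivalentTree G := by
  induction e with | h x y => ?_
  rw [isTrivalentTree_iff_connected, isTrivalentTree_iff_connected, isTrivalent_graft_iff he]
  exact and_congr_left' ⟨connected_of_connected_graft he, connected_graft⟩

theorem exists_lift_eq {a : Vert (n + 1)} (hnode : a ≠ Sum.inr j) (hleaf : a ≠ newLeaf n) :
    ∃ u, lift j u = a :=
  (eq_node_or_eq_newLeaf_or_exists_lift j a).resolve_left hnode |>.resolve_left hleaf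

theorem adj_iff_graft_adj_or (he : e ∈ G.edgeSet) {u v : Vert n} :
    G.Adj u v ↔ (graft G e j).Adj (lift j u) (lift j v) ∨ s(u, v) = e := by
  rw [graft_adj_lift]
  refine ⟨fun h ↦ ?_, ?_⟩
  · by_cases huv : s(u, v) = e
    exacts [.inr huv, .inl ⟨h, huv⟩]
  · rintro (⟨h, -⟩ | rfl)
    exacts [h, he]

theorem graft_injective {G' : SimpleGraph (Vert n)} {e' : Sym2 (Vert n)} {j' : Fin (n + 1)}
    (he : e ∈ G.edgeSet) (he' : e' ∈ G'.edgeSet) (h : graft G e j = graft G' e' j') :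
    G = G' ∧ e = e' ∧ j = j' := by
  obtain rfl : j = j' := by
    have := congrArg (·.neighborSet (newLeaf n)) h
    simpa only [neighborSet_graft_newLeaf, Set.singleton_eq_singleton_iff, Sum.inr.injEq]
      using this
  obtain rfl : e = e' :=
    Sym2.ext fun u ↦ by rw [← graft_adj_node_lift (G := G), h, graft_adj_node_lift]
  refine ⟨?_, rfl, rfl⟩
  ext u v
  rw [adj_iff_graft_adj_or he, adj_iff_graft_adj_or he', h]

theorem eq_of_neighborSet_eq_of_adj_lift_iff {H₁ H₂ : SimpleGraph (Vert (n + 1))}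
    (hnode : H₁.neighborSet (Sum.inr j) = H₂.neighborSet (Sum.inr j))
    (hleaf : H₁.neighborSet (newLeaf n) = H₂.neighborSet (newLeaf n))
    (hlift : ∀ u v, H₁.Adj (lift j u) (lift j v) ↔ H₂.Adj (lift j u) (lift j v)) :
    H₁ = H₂ := by
  have hside {a : Vert (n + 1)} (ha : a = Sum.inr j ∨ a = newLeaf n) (b) :
      H₁.Adj a b ↔ H₂.Adj a b := by
    rcases ha with rfl | rfl
    exacts [Set.ext_iff.mp hnode b, Set.ext_iff.mp hleaf b]
  ext a b
  rcases eq_node_or_eq_newLeaf_or_exists_lift j a with ha | ha | ⟨u, rfl⟩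
  · exact hside (.inl ha) b
  · exact hside (.inr ha) b
  rcases eq_node_or_eq_newLeaf_or_exists_lift j b with hb | hb | ⟨v, rfl⟩
  · rw [adj_comm, H₂.adj_comm]; exact hside (.inl hb) _
  · rw [adj_comm, H₂.adj_comm]; exact hside (.inr hb) _
  · exact hlift u v

section Prune

variable {H : SimpleGraph (Vert (n + 1))} (hH : IsTrivalentTree H)
include hH

theorem exists_neighborSet_newLeaf_eq : ∃ j, H.neighborSet (newLeaf n) = {Sum.inr j} := by
  obtain ⟨w, hw⟩ := Set.ncard_eq_one.mp (hH.2.1 (Fin.last _))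
  rcases w with i | j
  · have hadj : H.Adj (newLeaf n) (Sum.inl i) := by rw [← mem_neighborSet, hw]; rfl
    have hi : H.neighborSet (Sum.inl i) = {newLeaf n} :=
      (Set.eq_of_subset_of_ncard_le (Set.singleton_subset_iff.mpr hadj.symm)
        ((hH.2.1 i).trans (Set.ncard_singleton _).symm).le).symm
    -- two adjacent leaves would form a whole connected component
    simpa using hH.1.connected.eq_or_eq_of_neighborSet_eq hw hi (Sum.inr 0)
  · exact ⟨j, hw⟩

theorem exists_neighborSet_node_eq {j : Fin (n + 1)}
    (hj : H.neighborSet (newLeaf n) = {Sum.inr j}) :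
    ∃ x y, x ≠ y ∧ H.neighborSet (Sum.inr j) = {newLeaf n, lift j x, lift j y} := by
  have hmem : newLeaf n ∈ H.neighborSet (Sum.inr j) :=
    (show H.Adj (newLeaf n) (Sum.inr j) by rw [← mem_neighborSet, hj]; rfl).symm
  have htwo : (H.neighborSet (Sum.inr j) \ {newLeaf n}).ncard = 2 := by
    have := Set.ncard_sdiff_singleton_add_one hmem
    rw [hH.2.2 j] at this
    omega
  obtain ⟨a, b, hab, hN⟩ := Set.ncard_eq_two.mp htwo
  have hlift {c} (hc : c ∈ H.neighborSet (Sum.inr j) \ {newLeaf n}) : ∃ u, lift j u = c :=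
    exists_lift_eq (H.ne_of_adj hc.1).symm hc.2
  obtain ⟨x, rfl⟩ := hlift (by rw [hN]; exact .inl rfl)
  obtain ⟨y, rfl⟩ := hlift (by rw [hN]; exact .inr rfl)
  refine ⟨x, y, by rintro rfl; exact hab rfl, ?_⟩
  rw [← hN, Set.insert_sdiff_singleton, Set.insert_eq_of_mem hmem]

theorem exists_graft_eq :
    ∃ (G : SimpleGraph (Vert n)) (e : Sym2 (Vert n)) (j : Fin (n + 1)),
      e ∈ G.edgeSet ∧ graft G e j = H := by
  obtain ⟨j, hleaf⟩ := exists_neighborSet_newLeaf_eq hH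
  obtain ⟨x, y, hxy, hnode⟩ := exists_neighborSet_node_eq hH hleaf
  have hadj {u} (hu : u = x ∨ u = y) : H.Adj (Sum.inr j) (lift j u) := by
    rw [← mem_neighborSet, hnode]
    rcases hu with rfl | rfl <;> simp
  have hnadj : ¬ H.Adj (lift j x) (lift j y) := fun h ↦
    hH.1.isAcyclic.cliqueFree le_rfl {Sum.inr j, lift j x, lift j y}
      (is3Clique_triple_iff.mpr ⟨hadj (.inl rfl), hadj (.inr rfl), h⟩)
  -- delete the new leaf and its neighbour `j`, joining `x` and `y`
  refine ⟨H.comap (lift j) ⊔ edge x y, s(x, y), j, by simp [hxy], ?_⟩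
  refine eq_of_neighborSet_eq_of_adj_lift_iff (by rw [neighborSet_graft_node, hnode])
    (by rw [neighborSet_graft_newLeaf, hleaf]) fun u v ↦ ?_
  simp only [graft_adj_lift, sup_adj, comap_adj, edge_adj, ne_eq, Sym2.eq_iff]
  refine ⟨fun ⟨h, hne⟩ ↦ h.resolve_right fun h ↦ hne h.1, fun h ↦ ⟨.inl h, ?_⟩⟩
  rintro (⟨rfl, rfl⟩ | ⟨rfl, rfl⟩)
  exacts [hnadj h, hnadj h.symm]

end Prune

theorem isTrivalentTree_top : IsTrivalentTree (⊤ : SimpleGraph (Vert 0)) := by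
  refine isTrivalentTree_iff_connected.mpr ⟨connected_top, fun i ↦ ?_, finZeroElim⟩
  rw [neighborSet_top, Set.ncard_compl]
  simp

theorem eq_top_of_isTrivalent {G : SimpleGraph (Vert 0)} (hG : IsTrivalent G) : G = ⊤ := by
  ext a b
  refine ⟨G.ne_of_adj, fun hab ↦ ?_⟩
  obtain i | ⟨⟨_, ⟨⟩⟩⟩ := a
  obtain ⟨c, hc⟩ := Set.ncard_eq_one.mp (hG.1 i)
  have hac : G.Adj (Sum.inl i) c := by rw [← mem_neighborSet, hc]; rfl
  have two_vertices : ∀ a b c : Vert 0, a ≠ b → a ≠ c → c = b := by decide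
  exact two_vertices _ _ _ hab hac.ne ▸ hac

theorem card_two : Nat.card (LeafLabeledTrivalentTree 2) = 1 :=
  Nat.card_eq_one_iff_exists.mpr
    ⟨⟨⊤, isTrivalentTree_top⟩, fun G ↦ Subtype.ext (eq_top_of_isTrivalent G.2.2)⟩

noncomputable def graftEquiv (n : ℕ) :
    (Σ G : LeafLabeledTrivalentTree (n + 2), G.1.edgeSet × Fin (n + 1)) ≃
      LeafLabeledTrivalentTree (n + 1 + 2) :=
  Equiv.ofBijective
    (fun G ↦ ⟨graft G.1.1 G.2.1.1 G.2.2, (isTrivalentTree_graft_iff G.2.1.2).mpr G.1.2⟩)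
    ⟨fun ⟨⟨G, hG⟩, ⟨e, he⟩, j⟩ ⟨⟨G', hG'⟩, ⟨e', he'⟩, j'⟩ h ↦ by
      obtain ⟨rfl, rfl, rfl⟩ := graft_injective he he' (congrArg Subtype.val h)
      rfl,
    fun ⟨H, hH⟩ ↦ by
      obtain ⟨G, e, j, he, rfl⟩ := exists_graft_eq hH
      exact ⟨⟨⟨G, (isTrivalentTree_graft_iff he).mp hH⟩, ⟨e, he⟩, j⟩, rfl⟩⟩

theorem apply_node_eq_of_apply_newLeaf_eq (f : graft G e j →g graft G e j)
    (hleaf : f (newLeaf n) = newLeaf n) : f (Sum.inr j) = Sum.inr j := by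
  have h := (f.map_adj (graft_adj_node_newLeaf (G := G) (e := e))).symm
  rwa [hleaf, ← mem_neighborSet, neighborSet_graft_newLeaf] at h

theorem exists_injective_hom_of_graft (he : e ∈ G.edgeSet) (f : graft G e j →g graft G e j)
    (hf : Injective f) (hleaf : f (newLeaf n) = newLeaf n) :
    ∃ g : G →g G, Injective g ∧ ∀ u, f (lift j u) = lift j (g u) := by
  have hnode := apply_node_eq_of_apply_newLeaf_eq f hleaf
  have hlift (u : Vert n) : ∃ v, lift j v = f (lift j u) :=
    exists_lift_eq (fun h ↦ lift_ne_node u (hf (h.trans hnode.symm)))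
      (fun h ↦ lift_ne_newLeaf u (hf (h.trans hleaf.symm)))
  choose g hg using hlift
  have hg_inj : Injective g := fun u v huv ↦ lift_inj.mp (hf (by rw [← hg, ← hg, huv]))
  have hg_mem {u : Vert n} (hu : u ∈ e) : g u ∈ e := by
    rw [← graft_adj_node_lift (G := G) (j := j), hg, ← hnode]
    exact f.map_adj (graft_adj_node_lift.mpr hu)
  refine ⟨⟨g, fun {u v} huv ↦ ?_⟩, hg_inj, fun u ↦ (hg u).symm⟩
  rw [adj_iff_graft_adj_or he (j := j)]
  by_cases huv' : s(u, v) = e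
  · exact .inr ((Sym2.mem_and_mem_iff (hg_inj.ne huv.ne)).mp
      ⟨hg_mem (huv' ▸ Sym2.mem_mk_left u v), hg_mem (huv' ▸ Sym2.mem_mk_right u v)⟩).symm
  · exact .inl (by rw [hg, hg]; exact f.map_adj (graft_adj_lift.mpr ⟨huv, huv'⟩))

theorem IsTrivalentTree.apply_eq_self {G : SimpleGraph (Vert n)} (hG : IsTrivalentTree G)
    (f : G →g G) (hf : Injective f) (hleaf : ∀ i, f (Sum.inl i) = Sum.inl i) (v : Vert n) :
    f v = v := by
  induction n with
  | zero =>
    obtain i | ⟨⟨_, ⟨⟩⟩⟩ := v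
    exact hleaf i
  | succ n ih =>
    obtain ⟨G, e, j, he, rfl⟩ := exists_graft_eq hG
    obtain ⟨g, hg_inj, hg⟩ := exists_injective_hom_of_graft he f hf (hleaf _)
    have hg_id := ih ((isTrivalentTree_graft_iff he).mp hG) g hg_inj fun i ↦
      lift_inj.mp (by rw [← hg]; exact hleaf i.castSucc)
    rcases eq_node_or_eq_newLeaf_or_exists_lift j v with rfl | rfl | ⟨u, rfl⟩
    · exact apply_node_eq_of_apply_newLeaf_eq f (hleaf _)
    · exact hleaf _
    · rw [hg, hg_id]

instance (r : ℕ) : Finite (LeafLabeledTrivalentTree r) := Subtype.finite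

theorem card_succ (n : ℕ) :
    Nat.card (LeafLabeledTrivalentTree (n + 1 + 2)) =
      Nat.card (LeafLabeledTrivalentTree (n + 2)) * ((2 * n + 1) * (n + 1)) := by
  have := Fintype.ofFinite (LeafLabeledTrivalentTree (n + 2))
  rw [← Nat.card_congr (graftEquiv n), Nat.card_sigma]
  simp only [Nat.card_prod, fun G : LeafLabeledTrivalentTree (n + 2) ↦
    IsTrivalent.card_edgeSet G.2.2, Finset.sum_const, Finset.card_univ, smul_eq_mul,
    Nat.card_eq_fintype_card, Fintype.card_fin]

open Nat in
theorem card_eq (n : ℕ) : Nat.card (LeafLabeledTrivalentTree (n + 2)) = (2 * n - 1)‼ * n ! := by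
  induction n with
  | zero => exact card_two
  | succ n ih =>
    rw [card_succ, ih, show 2 * (n + 1) - 1 = 2 * n + 1 by omega, Nat.doubleFactorial_add_one,
      Nat.factorial_succ]
    ring

theorem isTrivalentTree_of_iso {G G' : SimpleGraph (Vert n)} (φ : G ≃g G')
    (hφ : ∀ i, φ (Sum.inl i) = Sum.inl i) (hG : IsTrivalentTree G) : IsTrivalentTree G' := by
  refine ⟨φ.isTree_iff.mp hG.1, fun i ↦ ?_, fun k ↦ ?_⟩
  · rw [← hφ i, φ.ncard_neighborSet]
    exact hG.2.1 i
  · rcases h : φ.symm (Sum.inr k) with i | k'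
    · simpa [hφ] using congrArg φ h
    · rw [← φ.apply_symm_apply (Sum.inr k), h, φ.ncard_neighborSet]
      exact hG.2.2 k'

theorem labIso_equivalence (r : ℕ) : Equivalence (labIso (r := r)) where
  refl _ := ⟨.refl, fun _ ↦ rfl⟩
  symm := fun ⟨φ, hφ⟩ ↦ ⟨φ.symm, fun i ↦ φ.symm_apply_eq.mpr (hφ i).symm⟩
  trans := fun ⟨φ, hφ⟩ ⟨ψ, hψ⟩ ↦ ⟨φ.trans ψ, fun i ↦ by simp [hφ, hψ]⟩

def relabel (σ : Equiv.Perm (Fin n)) (G : SimpleGraph (Vert n)) : SimpleGraph (Vert n) :=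
  G.comap (Equiv.Perm.sumCongr 1 σ)

def relabelIso (σ : Equiv.Perm (Fin n)) (G : SimpleGraph (Vert n)) : G ≃g relabel σ G :=
  (Iso.comap _ G).symm

@[simp]
theorem relabelIso_inl (σ : Equiv.Perm (Fin n)) (G : SimpleGraph (Vert n)) (i : Fin (n + 2)) :
    relabelIso σ G (Sum.inl i) = Sum.inl i :=
  rfl

theorem IsTrivalentTree.relabel_injective {G : SimpleGraph (Vert n)} (hG : IsTrivalentTree G) :
    Injective (relabel · G) := by
  intro σ τ h
  set σ' := Equiv.Perm.sumCongr (1 : Equiv.Perm (Fin (n + 2))) σ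
  set τ' := Equiv.Perm.sumCongr (1 : Equiv.Perm (Fin (n + 2))) τ
  have hhom (a b) (hab : G.Adj a b) : G.Adj (τ' (σ'.symm a)) (τ' (σ'.symm b)) := by
    have : (relabel σ G).Adj (σ'.symm a) (σ'.symm b) := by
      rwa [relabel, comap_adj, σ'.apply_symm_apply, σ'.apply_symm_apply]
    rw [show relabel σ G = relabel τ G from h] at this
    exact this
  have hid := hG.apply_eq_self ⟨_, hhom _ _⟩ (τ'.injective.comp σ'.symm.injective)
    (by simp [σ', τ', ← Equiv.Perm.inv_def])
  exact Equiv.ext fun k ↦ by simpa [σ', τ'] using (hid (.inr (σ k))).symm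

theorem exists_relabel_eq {G G' : SimpleGraph (Vert n)} (φ : G ≃g G')
    (hφ : ∀ i, φ (Sum.inl i) = Sum.inl i) : ∃ σ, relabel σ G = G' := by
  obtain ⟨σ, hσ⟩ := Equiv.Perm.exists_sumCongr_one_eq φ.toEquiv hφ
  have hσ' : Equiv.Perm.sumCongr 1 σ.symm = φ.toEquiv.symm := by
    rw [← hσ]
    ext (a | k) <;> simp [← Equiv.Perm.inv_def]
  refine ⟨σ.symm, ?_⟩
  ext a b
  simp only [relabel, comap_adj, hσ']
  exact φ.symm.map_adj_iff

theorem card_labIso_class (G₀ : LeafLabeledTrivalentTree (n + 2)) :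
    Nat.card {G // labIso G₀ G} = n.factorial := by
  let relabelClass (σ : Equiv.Perm (Fin n)) : {G // labIso G₀ G} :=
    ⟨⟨relabel σ G₀.1, isTrivalentTree_of_iso (relabelIso σ G₀.1) (relabelIso_inl σ _) G₀.2⟩,
      relabelIso σ G₀.1, relabelIso_inl σ _⟩
  have hsurj : Surjective relabelClass := fun ⟨G, φ, hφ⟩ ↦
    (exists_relabel_eq φ hφ).imp fun _ hσ ↦ Subtype.ext (Subtype.ext hσ)
  rw [← Nat.card_eq_of_bijective relabelClass
    ⟨fun σ τ h ↦ IsTrivalentTree.relabel_injective G₀.2 (congrArg (·.1.1) h), hsurj⟩,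
    Nat.card_perm, Nat.card_fin]

end LeafLabeledTrivalentTree

/-- The number of isomorphism classes of trees with `r ≥ 3` labeled leaves in which
every internal vertex has degree exactly 3 is the double factorial
`(2r − 5)!! = 1·3·5·…·(2r−5)`. -/
theorem card_trivalent_leaf_labeled_trees (r : ℕ) (hr : 3 ≤ r) :
    Nat.card (Quot (labIso (r := r))) = Nat.doubleFactorial (2 * r - 5) := by
  obtain ⟨n, rfl⟩ : ∃ n, r = n + 2 := ⟨r - 2, by omega⟩
  have h := Nat.card_quot_mul_eq_of_card_class
    (LeafLabeledTrivalentTree.labIso_equivalence (n + 2))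
    LeafLabeledTrivalentTree.card_labIso_class
  rw [LeafLabeledTrivalentTree.card_eq] at h
  rw [show 2 * (n + 2) - 5 = 2 * n - 1 by omega]
  exact Nat.eq_of_mul_eq_mul_right (Nat.factorial_pos n) h
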